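/- arXiv:2405.04519 — 4 statements merged into one kernel-verified Lean document; each statement's English description precedes it below -/
import Mathlib

section
/- Let G be a graph of maximum degree Δ ≥ 2 and fix a positive integer r. Suppose for some constant c = log₂(1 + 1/Δ^r)/(3r) and some x ≥ max(4r, x₀), every ball in G satisfies |N_{≤x+kr}(v)| ≤ 2^{c(x+kr)} for all k with 0 ≤ kr ≤ x. Then there exists α ∈ {x, x+1, …, 2x} such that |N_{≤α}(v)| ≥ Δ^r · |N_{=α+r}(v)|, where N_{≤d}(v) is the set of vertices at distance at most d from v and N_{=d}(v) the set at distance exactly d. -/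
/-!
If the inequality failed for every `α ∈ [x, 2x]`, then passing from radius `α` to `α + r` would
multiply the ball around `v` by more than `q = 1 + Δ⁻ʳ`, since the new sphere alone is larger than
`Δ⁻ʳ` times the old ball. Starting from the ball of radius `x`, which contains `v`, after
`K = ⌊x/r⌋` steps the ball of radius `x + K r` has at least `q ^ K` vertices. The choice of `c`
makes the growth hypothesis read `q ^ ((x + K r) / (3 r))`, and this exponent is smaller than `K`
because `x ≥ 4 r`.
-/

open Finset

namespace SimpleGraph

variable {V : Type*} [Fintype V] (G : SimpleGraph V) (v : V)

lemma one_le_card_filter_dist_le (d : ℕ) : 1 ≤ #{u | G.dist v u ≤ d} :=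
  card_pos.mpr ⟨v, by simp⟩

lemma card_filter_dist_le_add_card_filter_dist_eq_le [DecidableEq V] {a b : ℕ} (hab : a < b) :
    #{u | G.dist v u ≤ a} + #{u | G.dist v u = b} ≤ #{u | G.dist v u ≤ b} := by
  rw [← card_union_of_disjoint (disjoint_filter.mpr fun _ _ h₁ h₂ => by omega)]
  exact card_le_card fun u hu => by
    simp only [mem_union, mem_filter, mem_univ, true_and] at hu ⊢
    omega

lemma one_add_inv_mul_card_filter_dist_le_lt [DecidableEq V] {D a b : ℕ} (hD : 0 < D)
    (hab : a < b) (h : #{u | G.dist v u ≤ a} < D * #{u | G.dist v u = b}) :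
    (1 + 1 / (D : ℝ)) * #{u | G.dist v u ≤ a} < #{u | G.dist v u ≤ b} := by
  have hsum : (#{u | G.dist v u ≤ a} : ℝ) + #{u | G.dist v u = b} ≤ #{u | G.dist v u ≤ b} := by
    exact_mod_cast G.card_filter_dist_le_add_card_filter_dist_eq_le v hab
  have hsphere : (#{u | G.dist v u ≤ a} : ℝ) / D < #{u | G.dist v u = b} := by
    rw [div_lt_iff₀ (by exact_mod_cast hD), mul_comm]
    exact_mod_cast h
  rw [add_mul, one_mul, one_div_mul_eq_div]
  linarith

end SimpleGraph

lemma pow_le_of_mul_le_add_mul {B : ℕ → ℝ} {q : ℝ} {x r : ℕ} (hq : 0 ≤ q) (h₀ : 1 ≤ B x)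
    (hstep : ∀ k, (k + 1) * r ≤ x → q * B (x + k * r) ≤ B (x + (k + 1) * r)) :
    ∀ k, k * r ≤ x → q ^ k ≤ B (x + k * r) := by
  intro k
  induction k with
  | zero => simpa using h₀
  | succ k ih =>
    intro hk
    calc q ^ (k + 1) = q * q ^ k := pow_succ' q k
      _ ≤ q * B (x + k * r) := by gcongr; exact ih (le_trans (by gcongr; omega) hk)
      _ ≤ B (x + (k + 1) * r) := hstep k hk

lemma rpow_logb_div_mul {b a : ℝ} (hb : 0 < b) (hb₁ : b ≠ 1) (ha : 0 < a) (s t : ℝ) :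
    b ^ (Real.logb b a / s * t) = a ^ (t / s) := by
  rw [div_mul_eq_mul_div, mul_div_assoc, Real.rpow_mul hb.le, Real.rpow_logb hb hb₁ ha]

lemma add_div_mul_self_lt_three_mul {x r : ℕ} (hr : 0 < r) (hx : r ≤ x) :
    x + x / r * r < 3 * (x / r * r) := by
  have hlt : x < x / r * r + r := Nat.lt_div_mul_add hr
  have hle : r ≤ x / r * r := Nat.le_mul_of_pos_left r ((Nat.le_div_iff_mul_le hr).mpr (by omega))
  omega

theorem stmt_0_general {V : Type*} [Fintype V] [DecidableEq V]
    (G : SimpleGraph V) (Δ r x : ℕ) (c : ℝ)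
    (hΔ2 : 2 ≤ Δ) (hr : 0 < r)
    (hc : c = Real.logb 2 (1 + 1 / (Δ : ℝ) ^ r) / (3 * r))
    (hx : 4 * r ≤ x)
    (v : V)
    (hgrowth : ∀ k : ℕ, k * r ≤ x →
      ((Finset.univ.filter (fun u => G.dist v u ≤ x + k * r)).card : ℝ)
        ≤ (2 : ℝ) ^ (c * ((x : ℝ) + (k : ℝ) * r))) :
    ∃ α, x ≤ α ∧ α ≤ 2 * x ∧
      Δ ^ r * (Finset.univ.filter (fun u => G.dist v u = α + r)).card
        ≤ (Finset.univ.filter (fun u => G.dist v u ≤ α)).card := by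
  by_contra! hcon
  have hΔ : 0 < Δ := by omega
  set q : ℝ := 1 + 1 / (Δ : ℝ) ^ r
  have hq : 1 < q := lt_add_of_pos_right 1 (one_div_pos.mpr (pow_pos (mod_cast hΔ) r))
  set K := x / r
  have hKr : K * r ≤ x := Nat.div_mul_le_self x r
  have hlow : q ^ K ≤ #{u | G.dist v u ≤ x + K * r} := by
    refine pow_le_of_mul_le_add_mul (B := fun d => #{u | G.dist v u ≤ d}) (by linarith)
      (mod_cast G.one_le_card_filter_dist_le v x) (fun k hk => ?_) K hKr
    rw [add_one_mul] at hk
    rw [add_one_mul, ← add_assoc]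
    have hgrow := G.one_add_inv_mul_card_filter_dist_le_lt v (pow_pos hΔ r)
      (by omega) (hcon (x + k * r) (by omega) (by omega))
    push_cast at hgrow
    exact hgrow.le
  have hhigh := hgrowth K hKr
  rw [hc, rpow_logb_div_mul two_pos (by norm_num) (by linarith)] at hhigh
  have hexp : ((x : ℝ) + K * r) / (3 * r) < K := by
    rw [div_lt_iff₀ (by positivity)]
    have hKlt : x + K * r < 3 * (K * r) := add_div_mul_self_lt_three_mul hr (by omega)
    exact_mod_cast (by linarith : x + K * r < K * (3 * r))
  have hcmp := Real.rpow_lt_rpow_of_exponent_lt hq hexp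
  rw [Real.rpow_natCast] at hcmp
  linarith

/-- In a graph of max degree Δ ≥ 2, given the sub-exponential growth
bound for balls of radius x + kr (with c = log₂(1 + 1/Δ^r)/(3r) and x ≥ 4r),
there exists α ∈ [x, 2x] with |N_{≤α}(v)| ≥ Δ^r · |N_{=α+r}(v)|. -/
theorem stmt_0 {V : Type*} [Fintype V] [DecidableEq V]
    (G : SimpleGraph V) [DecidableRel G.Adj] (Δ r x : ℕ) (c : ℝ)
    (hΔ2 : 2 ≤ Δ) (hr : 0 < r)
    (hmax : ∀ v, G.degree v ≤ Δ)
    (hc : c = Real.logb 2 (1 + 1 / (Δ : ℝ) ^ r) / (3 * r))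
    (hx : 4 * r ≤ x)
    (v : V)
    (hgrowth : ∀ k : ℕ, k * r ≤ x →
      ((Finset.univ.filter (fun u => G.dist v u ≤ x + k * r)).card : ℝ)
        ≤ (2 : ℝ) ^ (c * ((x : ℝ) + (k : ℝ) * r))) :
    ∃ α, x ≤ α ∧ α ≤ 2 * x ∧
      Δ ^ r * (Finset.univ.filter (fun u => G.dist v u = α + r)).card
        ≤ (Finset.univ.filter (fun u => G.dist v u ≤ α)).card :=
  stmt_0_general G Δ r x c hΔ2 hr hc hx v hgrowth
end

section
/- Let G be a graph, v a vertex, and suppose that for every α in {x, …, 2x} we have |N_{≤α}(v)| < Δ^r · |N_{=α+r}(v)|. Then for every integer k with 0 ≤ kr ≤ x, it holds that |N_{≤x+kr}(v)| ≥ (1 + 1/Δ^r)^k · |N_{≤x}(v)|. -/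
/-! For `r > 0` the ball of radius `α + r` contains the disjoint union of the ball of radius `α`
and the sphere of radius `α + r`, so the hypothesis `|N_{≤α}| < Δ^r |N_{=α+r}|` gives
`|N_{≤α+r}| ≥ (1 + 1/Δ^r) |N_{≤α}|`. Iterating this along `α = x, x + r, …, x + (k-1) r`,
all of which lie in `[x, 2x]`, yields the geometric growth. -/

open Finset

theorem Finset.card_filter_le_add_card_filter_eq_le {V : Type*} [Fintype V] (f : V → ℕ)
    {a b : ℕ} (hab : a < b) : #{u | f u ≤ a} + #{u | f u = b} ≤ #{u | f u ≤ b} := by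
  classical
  rw [← card_union_of_disjoint (disjoint_filter.2 fun u _ h ↦ by omega)]
  exact card_le_card fun u ↦ by simp only [mem_union, mem_filter, mem_univ, true_and]; omega

-- For `D = 0` the factor `1 / D` is `0`, and the claim degenerates to `B ≤ C`.
theorem one_add_one_div_mul_le {B S C D : ℝ} (hD : 0 ≤ D) (hS : 0 ≤ S) (hBS : B ≤ D * S)
    (hC : B + S ≤ C) : (1 + 1 / D) * B ≤ C := by
  rcases hD.eq_or_lt with rfl | hD
  · simp only [div_zero, add_zero, one_mul]
    linarith
  · have : B / D ≤ S := (div_le_iff₀ hD).2 (by linarith)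
    rw [add_mul, one_mul, one_div_mul_eq_div]
    linarith

theorem stmt_1_general {V : Type*} [Fintype V]
    (G : SimpleGraph V) (Δ r x : ℕ)
    (hr : 0 < r)
    (v : V)
    (hyp : ∀ α, x ≤ α → α ≤ 2 * x →
      (Finset.univ.filter (fun u => G.dist v u ≤ α)).card
        < Δ ^ r * (Finset.univ.filter (fun u => G.dist v u = α + r)).card) :
    ∀ k : ℕ, k * r ≤ x →
      (1 + 1 / (Δ : ℝ) ^ r) ^ k
          * ((Finset.univ.filter (fun u => G.dist v u ≤ x)).card : ℝ)
        ≤ ((Finset.univ.filter (fun u => G.dist v u ≤ x + k * r)).card : ℝ) := by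
  intro k hk
  have growth := geom_le (u := fun n ↦ (#{u | G.dist v u ≤ x + n * r} : ℝ))
    (c := 1 + 1 / (Δ : ℝ) ^ r) (by positivity) k ?_
  · simpa using growth
  intro n hn
  have hsphere := hyp (x + n * r) (Nat.le_add_right _ _) (by nlinarith)
  have hsplit := card_filter_le_add_card_filter_eq_le (G.dist v)
    (show x + n * r < x + n * r + r by omega)
  rw [show x + (n + 1) * r = x + n * r + r by ring]
  exact one_add_one_div_mul_le (S := #{u | G.dist v u = x + n * r + r}) (by positivity)
    (by positivity) (by exact_mod_cast hsphere.le) (by exact_mod_cast hsplit)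

/-- If for every α ∈ [x, 2x], |N_{≤α}(v)| < Δ^r · |N_{=α+r}(v)|,
then for every k with kr ≤ x, |N_{≤x+kr}(v)| ≥ (1 + 1/Δ^r)^k · |N_{≤x}(v)|. -/
theorem stmt_1 {V : Type*} [Fintype V] [DecidableEq V]
    (G : SimpleGraph V) [DecidableRel G.Adj] (Δ r x : ℕ)
    (hr : 0 < r) (hx : 0 < x)
    (hmax : ∀ v, G.degree v ≤ Δ)
    (v : V)
    (hyp : ∀ α, x ≤ α → α ≤ 2 * x →
      (Finset.univ.filter (fun u => G.dist v u ≤ α)).card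
        < Δ ^ r * (Finset.univ.filter (fun u => G.dist v u = α + r)).card) :
    ∀ k : ℕ, k * r ≤ x →
      (1 + 1 / (Δ : ℝ) ^ r) ^ k
          * ((Finset.univ.filter (fun u => G.dist v u ≤ x)).card : ℝ)
        ≤ ((Finset.univ.filter (fun u => G.dist v u ≤ x + k * r)).card : ℝ) :=
  stmt_1_general G Δ r x hr v hyp
end

section
/- Let G be a graph with a proper 3-coloring φ: V → {1,2,3} that is greedy, meaning every vertex of color i has, for each color j < i, at least one neighbor of color j. Let C be a connected component of the subgraph induced by vertices of colors 2 and 3, and suppose C has diameter at least 2Δ, where Δ is the maximum degree of G. Then for every vertex v of C, either (1) there is a vertex w of C with dist_C(v,w) ≤ Δ having at least two neighbors of color 1 in G, or (2) there are adjacent vertices x, y of C with dist_C(v,x) ≤ Δ and dist_C(v,y) ≤ Δ that have no common neighbor of color 1 in G. -/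
/-!
Suppose neither alternative holds. Since the component has diameter at least `2Δ`, some vertex
of it is at distance at least `Δ` from `v`; let `v = x₀, x₁, …, x_Δ` be the start of a geodesic
towards it. Every `xₖ` then has at most one neighbour of colour 1 and consecutive `xₖ` share one,
so the colour-1 neighbour `u` of `v` provided by greediness is adjacent to all `Δ + 1` distinct
vertices `xₖ`, contradicting `deg u ≤ Δ`.
-/

namespace SimpleGraph

section Geodesic

variable {W : Type*} {H : SimpleGraph W}

lemma Walk.dist_getVert_of_length_eq_dist {u v : W} (p : H.Walk u v)
    (hp : p.length = H.dist u v) {k : ℕ} (hk : k ≤ p.length) :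
    H.dist u (p.getVert k) = k := by
  rw [← length_eq_dist_of_subwalk hp (p.isSubwalk_take k), Walk.take_length]
  omega

lemma Reachable.exists_le_dist {u a b : W} (ha : H.Reachable u a) (hb : H.Reachable u b)
    {n : ℕ} (hab : 2 * n ≤ H.dist a b) : ∃ c, H.Reachable u c ∧ n ≤ H.dist u c := by
  have htri : H.dist a b ≤ H.dist u a + H.dist u b := by
    simpa only [dist_comm] using ha.symm.dist_triangle_left b
  by_cases hna : n ≤ H.dist u a
  · exact ⟨a, ha, hna⟩
  · exact ⟨b, hb, by omega⟩

end Geodesic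

variable {V : Type*} {G : SimpleGraph V}

lemma adj_of_common_adj_chain {P : V → Prop} {x : ℕ → V} {u : V} {n : ℕ}
    (hu : G.Adj (x 0) u) (hPu : P u)
    (hunique : ∀ k ≤ n, {z | G.Adj (x k) z ∧ P z}.Subsingleton)
    (hcommon : ∀ k < n, ∃ z, G.Adj (x k) z ∧ G.Adj (x (k + 1)) z ∧ P z) :
    ∀ k ≤ n, G.Adj (x k) u := by
  intro k hk
  induction k with
  | zero => exact hu
  | succ k ih =>
    obtain ⟨z, hkz, hkz', hPz⟩ := hcommon k hk
    rwa [← hunique k (by omega) ⟨hkz, hPz⟩ ⟨ih (by omega), hPu⟩]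

lemma succ_le_degree_of_injOn {u : V} [Fintype (G.neighborSet u)] {x : ℕ → V} {n : ℕ}
    (hinj : Set.InjOn x (Set.Iic n)) (hadj : ∀ k ≤ n, G.Adj (x k) u) :
    n + 1 ≤ G.degree u := by
  rw [← card_neighborFinset_eq_degree, ← Finset.card_range (n + 1)]
  refine Finset.card_le_card_of_injOn x (fun k hk => ?_) (fun i hi j hj => hinj ?_ ?_)
  · exact (G.mem_neighborFinset u _).2 (hadj k (Nat.lt_succ_iff.1 (Finset.mem_range.1 hk))).symm
  · exact Nat.lt_succ_iff.1 (Finset.mem_coe.1 hi |> Finset.mem_range.1)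
  · exact Nat.lt_succ_iff.1 (Finset.mem_coe.1 hj |> Finset.mem_range.1)

end SimpleGraph

open SimpleGraph in
theorem stmt_7_general {V : Type*} [Fintype V]
    (G : SimpleGraph V) [DecidableRel G.Adj] (Δ : ℕ)
    (hΔ : ∀ v, G.degree v ≤ Δ)
    (φ : V → ℕ)
    (hgreedy : ∀ v j, 1 ≤ j → j < φ v → ∃ u, G.Adj v u ∧ φ u = j)
    (S : Set V) (hS : S = {v | φ v = 2 ∨ φ v = 3})
    (H : SimpleGraph S)
    (v : S)
    (hdiam : ∃ a b : S, H.Reachable v a ∧ H.Reachable v b ∧ 2 * Δ ≤ H.dist a b) :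
    (∃ w : S, H.Reachable v w ∧ H.dist v w ≤ Δ ∧
        ∃ u₁ u₂ : V, u₁ ≠ u₂ ∧ G.Adj (↑w) u₁ ∧ G.Adj (↑w) u₂ ∧ φ u₁ = 1 ∧ φ u₂ = 1) ∨
    (∃ x y : S, H.Adj x y ∧
        H.Reachable v x ∧ H.dist v x ≤ Δ ∧
        H.Reachable v y ∧ H.dist v y ≤ Δ ∧
        ¬ ∃ z : V, G.Adj (↑x) z ∧ G.Adj (↑y) z ∧ φ z = 1) := by
  by_contra! h
  obtain ⟨hsingle, hcommon⟩ := h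
  obtain ⟨a, b, hva, hvb, hab⟩ := hdiam
  obtain ⟨c, hvc, hc⟩ := hva.exists_le_dist hvb hab
  obtain ⟨p, hp⟩ := hvc.exists_walk_length_eq_dist
  have hdist k (hk : k ≤ Δ) : H.dist v (p.getVert k) = k :=
    p.dist_getVert_of_length_eq_dist hp (by omega)
  have hv : φ v = 2 ∨ φ v = 3 := by simpa [hS] using v.2
  obtain ⟨u, hvu, hu⟩ := hgreedy v 1 le_rfl (by omega)
  have hadj : ∀ k ≤ Δ, G.Adj (p.getVert k) u := by
    refine adj_of_common_adj_chain (x := fun k => (p.getVert k : V)) (P := (φ · = 1))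
      (by simpa using hvu) hu ?_ ?_
    · intro k hk z₁ hz₁ z₂ hz₂
      by_contra hne
      exact hsingle _ (p.take k).reachable ((hdist k hk).trans_le hk) z₁ z₂ hne hz₁.1 hz₂.1 hz₁.2
        hz₂.2
    · intro k hk
      exact hcommon _ _ (p.adj_getVert_succ (by omega)) (p.take k).reachable
        ((hdist k hk.le).trans_le hk.le) (p.take (k + 1)).reachable ((hdist (k + 1) hk).trans_le hk)
  have hinj : Set.InjOn (fun k => (p.getVert k : V)) (Set.Iic Δ) := fun i hi j hj hij => by
    rw [← hdist i hi, ← hdist j hj, Subtype.coe_injective hij]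
  exact Nat.not_succ_le_self Δ ((succ_le_degree_of_injOn hinj hadj).trans (hΔ u))

/-- In a greedy proper 3-coloring, for every vertex v of a component C
of the color-{2,3} induced subgraph of diameter ≥ 2Δ, either some w within distance
Δ of v in C has two neighbors of color 1 in G, or there are adjacent x, y within
distance Δ of v in C with no common neighbor of color 1 in G. -/
theorem stmt_7 {V : Type*} [Fintype V] [DecidableEq V]
    (G : SimpleGraph V) [DecidableRel G.Adj] (Δ : ℕ)
    (hΔ : ∀ v, G.degree v ≤ Δ)
    (φ : V → ℕ)
    (hrange : ∀ v, φ v = 1 ∨ φ v = 2 ∨ φ v = 3)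
    (hproper : ∀ u v, G.Adj u v → φ u ≠ φ v)
    (hgreedy : ∀ v j, 1 ≤ j → j < φ v → ∃ u, G.Adj v u ∧ φ u = j)
    (S : Set V) (hS : S = {v | φ v = 2 ∨ φ v = 3})
    (H : SimpleGraph S) (hH : H = G.induce S)
    (v : S)
    (hdiam : ∃ a b : S, H.Reachable v a ∧ H.Reachable v b ∧ 2 * Δ ≤ H.dist a b) :
    (∃ w : S, H.Reachable v w ∧ H.dist v w ≤ Δ ∧
        ∃ u₁ u₂ : V, u₁ ≠ u₂ ∧ G.Adj (↑w) u₁ ∧ G.Adj (↑w) u₂ ∧ φ u₁ = 1 ∧ φ u₂ = 1) ∨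
    (∃ x y : S, H.Adj x y ∧
        H.Reachable v x ∧ H.dist v x ≤ Δ ∧
        H.Reachable v y ∧ H.dist v y ≤ Δ ∧
        ¬ ∃ z : V, G.Adj (↑x) z ∧ G.Adj (↑y) z ∧ φ z = 1) :=
  stmt_7_general G Δ hΔ φ hgreedy S hS H v hdiam
end

section
/- (Symmetric Lovász Local Lemma) Let E₁, …, E_k be events in a probability space such that each E_i occurs with probability at most p and each E_i is mutually independent of all but at most d of the other events. If e·p·(d+1) ≤ 1 (e the base of natural logarithm), then the probability that none of the events occur is positive. -/
/-!
Fix a weight `q < 1` with `p ≤ q (1 - q)^d`. By strong induction on `S`, every event satisfies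
`μ (E i ∩ ⋂_{j ∈ S} E jᶜ) ≤ q · μ (⋂_{j ∈ S} E jᶜ)`: split `S` into the events outside and
inside `Γ i`; independence from the outside part gives the factor `μ (E i) ≤ q (1 - q)^d`,
and adding back the at most `d` inside events one at a time costs a factor `1 - q` each, by
the induction hypothesis. Adding all events in turn then gives `μ (⋂ E iᶜ) ≥ (1 - q)^k > 0`.
The symmetric condition provides the weight `q = 1 - exp (-1/(d+1))`, via
`t e^{-t} ≤ 1 - e^{-t}`.
-/

open MeasureTheory

namespace LovaszLocalLemma

section Sets

variable {Ω ι : Type*} {E : ι → Set Ω}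

def noneOf (E : ι → Set Ω) (S : Finset ι) : Set Ω := ⋂ j ∈ S, (E j)ᶜ

lemma noneOf_anti {S T : Finset ι} (hST : S ⊆ T) : noneOf E T ⊆ noneOf E S :=
  Set.biInter_subset_biInter_left fun _ hj ↦ hST hj

lemma noneOf_empty : noneOf E ∅ = Set.univ := by simp [noneOf]

lemma noneOf_insert [DecidableEq ι] (j : ι) (S : Finset ι) :
    noneOf E (insert j S) = (E j)ᶜ ∩ noneOf E S :=
  Finset.set_biInter_insert _ _ _

lemma inter_noneOf_of_mem {i : ι} {S : Finset ι} (hi : i ∈ S) : E i ∩ noneOf E S = ∅ :=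
  Set.eq_empty_of_forall_notMem fun _ hω ↦ Set.mem_iInter₂.mp hω.2 i hi hω.1

end Sets

variable {Ω : Type*} [MeasurableSpace Ω] {μ : Measure Ω}

lemma one_sub_mul_le_measure_compl_inter {s A : Set Ω} {q : ENNReal}
    (hA : μ A ≠ ⊤) (h : μ (s ∩ A) ≤ q * μ A) : (1 - q) * μ A ≤ μ (sᶜ ∩ A) :=
  calc (1 - q) * μ A = μ A - q * μ A := by rw [ENNReal.sub_mul fun _ _ ↦ hA, one_mul]
    _ ≤ μ A - μ (s ∩ A) := tsub_le_tsub_left h _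
    _ ≤ μ (A \ (s ∩ A)) := le_measure_sdiff
    _ = μ (sᶜ ∩ A) := by
      rw [Set.inter_comm s A, Set.sdiff_self_inter, Set.sdiff_eq, Set.inter_comm]

variable [IsFiniteMeasure μ] {ι : Type*} [DecidableEq ι] {E : ι → Set Ω} {q : ENNReal}

lemma one_sub_pow_card_mul_le_measure_noneOf_union {S T : Finset ι} (hST : Disjoint S T)
    (h : ∀ j ∈ T, ∀ U ⊆ S ∪ T, j ∉ U →
      μ (E j ∩ noneOf E U) ≤ q * μ (noneOf E U)) :
    (1 - q) ^ T.card * μ (noneOf E S) ≤ μ (noneOf E (S ∪ T)) := by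
  induction T using Finset.induction with
  | empty => simp
  | @insert j T hjT ih =>
    have hjU : j ∉ S ∪ T := by
      simp [hjT, Finset.disjoint_right.mp hST (Finset.mem_insert_self j T)]
    have hsub : S ∪ T ⊆ S ∪ insert j T :=
      Finset.union_subset_union_right (Finset.subset_insert _ _)
    have ih' := ih (hST.mono_right (Finset.subset_insert _ _))
      fun j' hj' U hU ↦ h j' (Finset.mem_insert_of_mem hj') U (hU.trans hsub)
    calc (1 - q) ^ (insert j T).card * μ (noneOf E S)
        = (1 - q) * ((1 - q) ^ T.card * μ (noneOf E S)) := by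
          rw [Finset.card_insert_of_notMem hjT, pow_succ', mul_assoc]
      _ ≤ (1 - q) * μ (noneOf E (S ∪ T)) := by gcongr
      _ ≤ μ ((E j)ᶜ ∩ noneOf E (S ∪ T)) :=
        one_sub_mul_le_measure_compl_inter (measure_ne_top _ _)
          (h j (Finset.mem_insert_self j T) _ hsub hjU)
      _ = μ (noneOf E (S ∪ insert j T)) := by rw [Finset.union_insert, noneOf_insert]

lemma measure_inter_noneOf_le {d : ℕ} (Γ : ι → Finset ι) (hΓcard : ∀ i, (Γ i).card ≤ d)
    (hindep : ∀ i, ∀ J : Finset ι, (∀ j ∈ J, j ≠ i ∧ j ∉ Γ i) →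
      μ (E i ∩ noneOf E J) = μ (E i) * μ (noneOf E J))
    (hq : ∀ i, μ (E i) ≤ q * (1 - q) ^ d) (S : Finset ι) (i : ι) :
    μ (E i ∩ noneOf E S) ≤ q * μ (noneOf E S) := by
  induction S using Finset.strongInduction generalizing i with | H S ih => ?_
  by_cases hiS : i ∈ S
  · simp [inter_noneOf_of_mem hiS]
  have hfar : μ (E i ∩ noneOf E (S \ Γ i)) = μ (E i) * μ (noneOf E (S \ Γ i)) :=
    hindep i _ fun j hj ↦
      ⟨fun h ↦ hiS (h ▸ (Finset.mem_sdiff.mp hj).1), (Finset.mem_sdiff.mp hj).2⟩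
  have hnear : (1 - q) ^ (S ∩ Γ i).card * μ (noneOf E (S \ Γ i)) ≤ μ (noneOf E S) := by
    have hS : S \ Γ i ∪ S ∩ Γ i = S := Finset.sdiff_union_inter S (Γ i)
    have h := one_sub_pow_card_mul_le_measure_noneOf_union (μ := μ) (E := E) (q := q)
      (Finset.disjoint_sdiff_inter S (Γ i)) fun j hj U hU hjU ↦ by
        rw [hS] at hU
        exact ih U ((Finset.ssubset_iff_of_subset hU).mpr
          ⟨j, (Finset.mem_inter.mp hj).1, hjU⟩) j
    rwa [hS] at h
  calc μ (E i ∩ noneOf E S) ≤ μ (E i ∩ noneOf E (S \ Γ i)) :=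
        measure_mono (Set.inter_subset_inter_right _ (noneOf_anti Finset.sdiff_subset))
    _ = μ (E i) * μ (noneOf E (S \ Γ i)) := hfar
    _ ≤ q * (1 - q) ^ d * μ (noneOf E (S \ Γ i)) := by gcongr; exact hq i
    _ ≤ q * (1 - q) ^ (S ∩ Γ i).card * μ (noneOf E (S \ Γ i)) := by
        gcongr q * ?_ * _
        exact pow_le_pow_of_le_one zero_le tsub_le_self
          ((Finset.card_le_card Finset.inter_subset_right).trans (hΓcard i))
    _ ≤ q * μ (noneOf E S) := by rw [mul_assoc]; gcongr

theorem measure_noneOf_pos [IsProbabilityMeasure μ] {d : ℕ} (Γ : ι → Finset ι)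
    (hΓcard : ∀ i, (Γ i).card ≤ d)
    (hindep : ∀ i, ∀ J : Finset ι, (∀ j ∈ J, j ≠ i ∧ j ∉ Γ i) →
      μ (E i ∩ noneOf E J) = μ (E i) * μ (noneOf E J))
    (hq1 : q < 1) (hq : ∀ i, μ (E i) ≤ q * (1 - q) ^ d) (S : Finset ι) :
    0 < μ (noneOf E S) := by
  have h := one_sub_pow_card_mul_le_measure_noneOf_union (μ := μ) (E := E) (q := q)
    (Finset.disjoint_empty_left S)
    fun j _ U _ _ ↦ measure_inter_noneOf_le Γ hΓcard hindep hq U j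
  rw [noneOf_empty, measure_univ, mul_one, Finset.empty_union] at h
  exact (ENNReal.pow_pos (tsub_pos_of_lt hq1) _).trans_le h

lemma mul_exp_neg_le_one_sub_exp_neg_mul_pow {t : ℝ} (n : ℕ) :
    t * Real.exp (-(t * (n + 1))) ≤ (1 - Real.exp (-t)) * Real.exp (-t) ^ n := by
  have h : t * Real.exp (-t) ≤ 1 - Real.exp (-t) := by
    have h1 : (t + 1) * Real.exp (-t) ≤ Real.exp t * Real.exp (-t) := by
      gcongr; exact Real.add_one_le_exp t
    rw [← Real.exp_add, add_neg_cancel, Real.exp_zero] at h1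
    linarith
  calc t * Real.exp (-(t * (n + 1))) = t * Real.exp (-t) * Real.exp (-t) ^ n := by
        rw [← Real.exp_nat_mul, mul_assoc, ← Real.exp_add]; ring_nf
    _ ≤ (1 - Real.exp (-t)) * Real.exp (-t) ^ n := by gcongr

lemma exists_lt_one_le_mul_one_sub_pow {p : ENNReal} {d : ℕ}
    (h : ENNReal.ofReal (Real.exp 1) * p * (d + 1) ≤ 1) :
    ∃ q : ENNReal, q < 1 ∧ p ≤ q * (1 - q) ^ d := by
  set t : ℝ := ((d : ℝ) + 1)⁻¹
  have ht : t * (d + 1) = 1 := inv_mul_cancel₀ (by positivity)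
  have hexp : Real.exp (-t) ≤ 1 := Real.exp_le_one_iff.mpr (neg_nonpos.mpr (by positivity))
  refine ⟨ENNReal.ofReal (1 - Real.exp (-t)), ?_, ?_⟩
  · exact ENNReal.ofReal_lt_one.mpr (by linarith [Real.exp_pos (-t)])
  have hp : p ≤ ENNReal.ofReal (Real.exp 1 * (d + 1))⁻¹ := by
    rw [ENNReal.ofReal_inv_of_pos (by positivity), ENNReal.le_inv_iff_mul_le,
      ENNReal.ofReal_mul (Real.exp_pos 1).le]
    convert h using 1
    rw [← Nat.cast_succ, ENNReal.ofReal_natCast]; push_cast; ring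
  have h1q : 1 - ENNReal.ofReal (1 - Real.exp (-t)) = ENNReal.ofReal (Real.exp (-t)) := by
    rw [← ENNReal.ofReal_one, ← ENNReal.ofReal_sub _ (by linarith), sub_sub_cancel]
  rw [h1q, ← ENNReal.ofReal_pow (Real.exp_pos _).le,
    ← ENNReal.ofReal_mul (by linarith)]
  refine hp.trans (ENNReal.ofReal_le_ofReal ?_)
  calc (Real.exp 1 * (d + 1))⁻¹ = t * Real.exp (-(t * (d + 1))) := by
        rw [ht, Real.exp_neg, mul_inv, mul_comm]
    _ ≤ _ := mul_exp_neg_le_one_sub_exp_neg_mul_pow d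

end LovaszLocalLemma

theorem stmt_14_general {Ω : Type*} [MeasurableSpace Ω]
    (μ : Measure Ω) [IsProbabilityMeasure μ]
    (k d : ℕ) (p : ENNReal) (E : Fin k → Set Ω)
    (hp : ∀ i, μ (E i) ≤ p)
    (Γ : Fin k → Finset (Fin k))
    (hΓcard : ∀ i, (Γ i).card ≤ d)
    (hindep : ∀ i, ∀ J : Finset (Fin k), (∀ j ∈ J, j ≠ i ∧ j ∉ Γ i) →
      μ (E i ∩ ⋂ j ∈ J, (E j)ᶜ) = μ (E i) * μ (⋂ j ∈ J, (E j)ᶜ))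
    (hlll : ENNReal.ofReal (Real.exp 1) * p * ((d : ENNReal) + 1) ≤ 1) :
    0 < μ (⋂ i, (E i)ᶜ) := by
  obtain ⟨q, hq1, hpq⟩ := LovaszLocalLemma.exists_lt_one_le_mul_one_sub_pow hlll
  have h := LovaszLocalLemma.measure_noneOf_pos Γ hΓcard hindep hq1
    (fun i ↦ (hp i).trans hpq) Finset.univ
  simpa [LovaszLocalLemma.noneOf] using h

/-- Symmetric Lovász Local Lemma: if each event has probability at
most p, each event is mutually independent of all but at most d of the others, and
e·p·(d+1) ≤ 1, then with positive probability none of the events occurs. -/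
theorem stmt_14 {Ω : Type*} [MeasurableSpace Ω]
    (μ : Measure Ω) [IsProbabilityMeasure μ]
    (k d : ℕ) (p : ENNReal) (E : Fin k → Set Ω)
    (hmeas : ∀ i, MeasurableSet (E i))
    (hp : ∀ i, μ (E i) ≤ p)
    (Γ : Fin k → Finset (Fin k))
    (hΓcard : ∀ i, (Γ i).card ≤ d)
    (hΓi : ∀ i, i ∉ Γ i)
    (hindep : ∀ i, ∀ J : Finset (Fin k), (∀ j ∈ J, j ≠ i ∧ j ∉ Γ i) →
      μ (E i ∩ ⋂ j ∈ J, (E j)ᶜ) = μ (E i) * μ (⋂ j ∈ J, (E j)ᶜ))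
    (hlll : ENNReal.ofReal (Real.exp 1) * p * ((d : ENNReal) + 1) ≤ 1) :
    0 < μ (⋂ i, (E i)ᶜ) :=
  stmt_14_general μ k d p E hp Γ hΓcard hindep hlll
end
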